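/- Let x be a real number represented by (m,n,p) with p ≥ 1 and 0 < m/n < 1. Let N = ⌈2^(p-2) · (n/m)² / (n/m - 1)⌉, let j be a natural number with 2^j ≥ (1 + m/n)/(1 - m/n), and assume p ≥ j + 5. Define S = ((n/m - 1)/N) · Σ_{i=0}^{N-1} 1/(1 + (i/N)·(n/m - 1)). Then ln(x) is approximated by -S with relative error less than 1/2^(p-j-5); that is, |ln(x) - (-S)| < |S| * (1/2^(p-j-5)). -/

import Mathlib

/-!
With `a = m/n` and `r = n/m = a⁻¹`, the sum `S` is the left Riemann sum of `t ↦ 1/t` on `[1, r]`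
with `N` steps of width `h = (r - 1)/N`. Since `1/t` is decreasing, comparing each step with the
increment of `log` gives `log r ≤ S ≤ log r + h (1 - 1/r)`, and the choice of `N` makes
`h ≤ 4 (1 - a)² / 2^p`; so `S` exceeds `-log a` by at most `4/2^p`. The representation gives
`|log x - log a| < 2/2^p`, hence `|log x + S| < 6/2^p`, while `S ≥ log r ≥ 1 - a ≥ 2^(-j)` makes
the right-hand side at least `32/2^p`.
-/

open Real Finset

lemma log_sub_log_le_div {u v : ℝ} (hu : 0 < u) (hv : 0 < v) :
    log v - log u ≤ (v - u) / u := by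
  have h := log_le_sub_one_of_pos (div_pos hv hu)
  rwa [log_div hv.ne' hu.ne', div_sub_one hu.ne'] at h

lemma abs_log_sub_log_lt {x a ε : ℝ} (ha : 0 < a) (hε : ε ≤ 1 / 2) (hx : |x - a| < a * ε) :
    |log x - log a| < 2 * ε := by
  obtain ⟨hlo, hhi⟩ := abs_lt.mp hx
  have hε₀ : 0 < ε := pos_of_mul_pos_right ((abs_nonneg _).trans_lt hx) ha.le
  have hx₀ : a / 2 < x := by nlinarith
  have hx : 0 < x := by linarith
  rw [abs_lt]
  constructor
  · have h := log_sub_log_le_div hx ha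
    have : (a - x) / x < 2 * ε := by rw [div_lt_iff₀ hx]; nlinarith
    linarith
  · have h := log_sub_log_le_div ha hx
    have : (x - a) / a < ε := by rw [div_lt_iff₀ ha]; linarith
    linarith

/-- The left Riemann sum of `t ↦ 1/t` on `[1, 1 + N h]` with step `h`. -/
noncomputable def invLeftRiemannSum (h : ℝ) (N : ℕ) : ℝ :=
  ∑ i ∈ range N, h / (1 + i * h)

lemma log_le_invLeftRiemannSum {h : ℝ} (hh : 0 ≤ h) (N : ℕ) :
    log (1 + N * h) ≤ invLeftRiemannSum h N := by
  have step (i : ℕ) : log (1 + (i + 1 : ℕ) * h) - log (1 + i * h) ≤ h / (1 + i * h) := by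
    calc _ ≤ ((1 + (i + 1 : ℕ) * h) - (1 + i * h)) / (1 + i * h) :=
          log_sub_log_le_div (by positivity) (by positivity)
      _ = h / (1 + i * h) := by push_cast; ring
  calc log (1 + N * h)
      = ∑ i ∈ range N, (log (1 + (i + 1 : ℕ) * h) - log (1 + i * h)) := by
        rw [sum_range_sub (fun i : ℕ => log (1 + i * h))]; simp
    _ ≤ invLeftRiemannSum h N := sum_le_sum fun i _ => step i

lemma invLeftRiemannSum_le_log_add {h : ℝ} (hh : 0 ≤ h) (N : ℕ) :
    invLeftRiemannSum h N ≤ log (1 + N * h) + (h - h / (1 + N * h)) := by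
  set L : ℕ → ℝ := fun i => log (1 + i * h)
  set g : ℕ → ℝ := fun i => h / (1 + i * h)
  have step (i : ℕ) : g (i + 1) ≤ L (i + 1) - L i := by
    have hlog := log_sub_log_le_div (u := 1 + (i + 1 : ℕ) * h) (v := 1 + i * h)
      (by positivity) (by positivity)
    have e : ((1 + i * h) - (1 + (i + 1 : ℕ) * h)) / (1 + (i + 1 : ℕ) * h) = -g (i + 1) := by
      simp only [g]; push_cast; ring
    simp only [L]
    linarith
  calc invLeftRiemannSum h N = ∑ i ∈ range N, (g (i + 1) + (g i - g (i + 1))) := by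
        simp [invLeftRiemannSum, g]
    _ ≤ ∑ i ∈ range N, ((L (i + 1) - L i) + (g i - g (i + 1))) := by
        gcongr with i; exact step i
    _ = log (1 + N * h) + (h - h / (1 + N * h)) := by
        rw [sum_add_distrib, sum_range_sub, sum_range_sub']; simp [L, g]

lemma div_mul_sum_eq_invLeftRiemannSum (c : ℝ) (N : ℕ) :
    c / N * ∑ i ∈ range N, 1 / (1 + (i : ℝ) / N * c) = invLeftRiemannSum (c / N) N := by
  rw [invLeftRiemannSum, mul_sum]
  refine sum_congr rfl fun i _ => ?_
  rw [mul_one_div, div_mul_eq_mul_div, mul_div_assoc]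

lemma log_le_invLeftRiemannSum_div {r : ℝ} (hr : 1 ≤ r) {N : ℕ} (hN : N ≠ 0) :
    log r ≤ invLeftRiemannSum ((r - 1) / N) N := by
  have h := log_le_invLeftRiemannSum (div_nonneg (sub_nonneg.mpr hr) N.cast_nonneg) N
  rwa [mul_div_cancel₀ _ (Nat.cast_ne_zero.mpr hN), add_sub_cancel] at h

lemma invLeftRiemannSum_div_sub_log_le {r q : ℝ} {N : ℕ} (hr : 1 < r) (hq : 0 < q)
    (hN : q * r ^ 2 / (r - 1) ≤ N) :
    invLeftRiemannSum ((r - 1) / N) N - log r ≤ (1 - r⁻¹) ^ 3 / q := by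
  have hr₁ : 0 < r - 1 := sub_pos.mpr hr
  have hN₀ : (0 : ℝ) < N := lt_of_lt_of_le (by positivity) hN
  set h := (r - 1) / N
  have hNh : 1 + N * h = r := by rw [mul_div_cancel₀ _ hN₀.ne', add_sub_cancel]
  have hstep : h ≤ (1 - r⁻¹) ^ 2 / q := calc
    h ≤ (r - 1) / (q * r ^ 2 / (r - 1)) := div_le_div_of_nonneg_left hr₁.le (by positivity) hN
    _ = (1 - r⁻¹) ^ 2 / q := by field_simp
  have hupper := invLeftRiemannSum_le_log_add (by positivity : 0 ≤ h) N
  rw [hNh] at hupper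
  have hr' : 0 ≤ 1 - r⁻¹ := sub_nonneg.mpr (inv_le_one_of_one_le₀ hr.le)
  calc invLeftRiemannSum h N - log r ≤ h * (1 - r⁻¹) := by
        rw [mul_one_sub, ← div_eq_mul_inv]; linarith
    _ ≤ (1 - r⁻¹) ^ 2 / q * (1 - r⁻¹) := by gcongr
    _ = (1 - r⁻¹) ^ 3 / q := by ring

lemma one_div_le_one_sub_of_one_add_div_le {a c : ℝ} (ha₀ : 0 ≤ a) (ha₁ : a < 1) (hc : 0 < c)
    (h : (1 + a) / (1 - a) ≤ c) : 1 / c ≤ 1 - a := by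
  rw [div_le_iff₀ (sub_pos.mpr ha₁)] at h
  rw [div_le_iff₀ hc]
  nlinarith

lemma one_div_two_pow_sub {k p : ℕ} (hk : k ≤ p) :
    1 / (2 : ℝ) ^ (p - k) = 2 ^ k * (1 / 2 ^ p) := by
  rw [pow_sub₀ _ two_ne_zero hk]
  field_simp

theorem log_represented_lt_one_general (x : ℝ) (m n : ℤ) (p j N : ℕ)
    (hx : |x - (m : ℝ) / (n : ℝ)| < |(m : ℝ) / (n : ℝ)| * (1 / 2 ^ p))
    (hmn₀ : 0 < (m : ℝ) / (n : ℝ)) (hmn₁ : (m : ℝ) / (n : ℝ) < 1)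
    (hN : N = ⌈(2 : ℝ) ^ (p - 2) * ((n : ℝ) / (m : ℝ)) ^ 2 / ((n : ℝ) / (m : ℝ) - 1)⌉₊)
    (hj : (2 : ℝ) ^ j ≥ (1 + (m : ℝ) / (n : ℝ)) / (1 - (m : ℝ) / (n : ℝ)))
    (hpj : j + 5 ≤ p) :
    |Real.log x -
        -(((n : ℝ) / (m : ℝ) - 1) / N *
          ∑ i ∈ Finset.range N, 1 / (1 + (i : ℝ) / N * ((n : ℝ) / (m : ℝ) - 1)))| <
      |((n : ℝ) / (m : ℝ) - 1) / N *
          ∑ i ∈ Finset.range N, 1 / (1 + (i : ℝ) / N * ((n : ℝ) / (m : ℝ) - 1))| *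
        (1 / 2 ^ (p - j - 5)) := by
  set a : ℝ := m / n
  set r : ℝ := n / m
  have hra : r⁻¹ = a := inv_div _ _
  have hr : 1 < r := by rw [← inv_inv r, hra]; exact one_lt_inv_iff₀.mpr ⟨hmn₀, hmn₁⟩
  have hNr : 2 ^ (p - 2) * r ^ 2 / (r - 1) ≤ (N : ℝ) := hN ▸ Nat.le_ceil _
  have hN₀ : N ≠ 0 := by
    have : (0 : ℝ) < 2 ^ (p - 2) * r ^ 2 / (r - 1) := div_pos (by positivity) (sub_pos.mpr hr)
    exact_mod_cast (this.trans_le hNr).ne'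
  rw [div_mul_sum_eq_invLeftRiemannSum]
  set S := invLeftRiemannSum ((r - 1) / N) N
  set ε : ℝ := 1 / 2 ^ p
  have hε : ε ≤ 1 / 2 := one_div_le_one_div_of_le two_pos (le_self_pow₀ one_le_two (by omega))
  have hlog : |log x - log a| < 2 * ε :=
    abs_log_sub_log_lt hmn₀ hε (by rwa [abs_of_pos hmn₀] at hx)
  have hlower : log r ≤ S := log_le_invLeftRiemannSum_div hr.le hN₀
  have hupper : S - log r ≤ 2 ^ 2 * ε := calc
    S - log r ≤ (1 - a) ^ 3 / 2 ^ (p - 2) :=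
      hra ▸ invLeftRiemannSum_div_sub_log_le hr (by positivity) hNr
    _ ≤ 1 / 2 ^ (p - 2) := by gcongr; exact pow_le_one₀ (by linarith) (by linarith)
    _ = 2 ^ 2 * ε := one_div_two_pow_sub (by omega)
  have hSj : 1 / 2 ^ j ≤ S := calc
    1 / 2 ^ j ≤ 1 - a := one_div_le_one_sub_of_one_add_div_le hmn₀.le hmn₁ (by positivity) hj
    _ ≤ log r := hra ▸ one_sub_inv_le_log_of_pos (by linarith)
    _ ≤ S := hlower
  have hlog_r : log r = -log a := by rw [← hra, log_inv, neg_neg]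
  rw [abs_of_pos (lt_of_lt_of_le (by positivity) hSj), Nat.sub_sub, one_div_two_pow_sub hpj]
  calc |log x - -S| = |(log x - log a) + (S - log r)| := by rw [hlog_r]; ring_nf
    _ ≤ |log x - log a| + (S - log r) :=
        (abs_add_le _ _).trans_eq (by rw [abs_of_nonneg (sub_nonneg.mpr hlower)])
    _ < 32 * ε := by linarith [(by positivity : 0 < ε)]
    _ = 1 / 2 ^ j * (2 ^ (j + 5) * ε) := by rw [pow_add]; field_simp; ring
    _ ≤ S * (2 ^ (j + 5) * ε) := by gcongr

/-- Riemann-sum approximation of `ln x` for `0 < m/n < 1`: if `x` is represented by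
`(m, n, p)` with `p ≥ 1`, `N = ⌈2 ^ (p - 2) * (n/m) ^ 2 / (n/m - 1)⌉`, `j` satisfies
`2 ^ j ≥ (1 + m/n) / (1 - m/n)`, and `p ≥ j + 5`, then with
`S = ((n/m - 1) / N) * ∑_{i=0}^{N-1} 1 / (1 + (i / N) * (n/m - 1))` the value `-S`
approximates `ln x` with relative error less than `1 / 2 ^ (p - j - 5)`. -/
theorem log_represented_lt_one (x : ℝ) (m n : ℤ) (p j N : ℕ)
    (hm : m ≠ 0) (hn : n ≠ 0) (hp : 1 ≤ p)
    (hx : |x - (m : ℝ) / (n : ℝ)| < |(m : ℝ) / (n : ℝ)| * (1 / 2 ^ p))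
    (hmn₀ : 0 < (m : ℝ) / (n : ℝ)) (hmn₁ : (m : ℝ) / (n : ℝ) < 1)
    (hN : N = ⌈(2 : ℝ) ^ (p - 2) * ((n : ℝ) / (m : ℝ)) ^ 2 / ((n : ℝ) / (m : ℝ) - 1)⌉₊)
    (hj : (2 : ℝ) ^ j ≥ (1 + (m : ℝ) / (n : ℝ)) / (1 - (m : ℝ) / (n : ℝ)))
    (hpj : j + 5 ≤ p) :
    |Real.log x -
        -(((n : ℝ) / (m : ℝ) - 1) / N *
          ∑ i ∈ Finset.range N, 1 / (1 + (i : ℝ) / N * ((n : ℝ) / (m : ℝ) - 1)))| <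
      |((n : ℝ) / (m : ℝ) - 1) / N *
          ∑ i ∈ Finset.range N, 1 / (1 + (i : ℝ) / N * ((n : ℝ) / (m : ℝ) - 1))| *
        (1 / 2 ^ (p - j - 5)) :=
  log_represented_lt_one_general x m n p j N hx hmn₀ hmn₁ hN hj hpj
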